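/- For N oscillators with all-to-all r-body couplings x^{⊗r} (r dividing N, r ≥ 2), the number of measurement circuits required is at most (d−1)^r · C(N−1, r−1) + 1, which is O(d^r N^{r−1}). -/

import Mathlib

open Matrix Finset

/-- The four single-qubit Pauli matrices: I, X, Y, Z. -/
noncomputable def pauli : Fin 4 → Matrix (Fin 2) (Fin 2) ℂ :=
  ![1, !![0, 1; 1, 0], !![0, -Complex.I; Complex.I, 0], !![1, 0; 0, -1]]

/-- The integer encoded by a bit string (qubit `i` carries bit `i`, LSB at `i = 0`). -/
def bval {m : ℕ} (b : Fin m → Fin 2) : ℕ := ∑ i : Fin m, 2 ^ (i : ℕ) * (b i : ℕ)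

/-- Matrix elements of the truncated position operator in the Fock basis. -/
noncomputable def xc (a b : ℕ) : ℂ :=
  if a = b + 1 then (Real.sqrt (b + 1) : ℂ)
  else if b = a + 1 then (Real.sqrt (a + 1) : ℂ) else 0

/-- Matrix elements of the binary-encoded position operator on one `m`-qubit register. -/
noncomputable def xe {m : ℕ} (b b' : Fin m → Fin 2) : ℂ := xc (bval b) (bval b')

/-- Matrix elements of the binary-encoded `x² + p² = ∑ₙ (2n+1)|n⟩⟨n|` on one register. -/
noncomputable def numE {m : ℕ} (b b' : Fin m → Fin 2) : ℂ :=
  if b = b' then (2 * (bval b : ℂ) + 1) else 0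

/-- The Hamiltonian of `N` binary-encoded `d = 2^m` level oscillators with all-to-all
`r`-body couplings `x^{⊗r}`: `H = ∑ᵢ (xᵢ² + pᵢ²) + ∑_{|A| = r} γ_A ∏_{i ∈ A} xᵢ`. -/
noncomputable def HamR (N m r : ℕ) (γ : Finset (Fin N) → ℝ) :
    Matrix (Fin N → Fin m → Fin 2) (Fin N → Fin m → Fin 2) ℂ :=
  Matrix.of fun b b' =>
    (∑ i : Fin N,
      if ∀ l, l ≠ i → b l = b' l then numE (b i) (b' i) else 0)
    + ∑ A : Finset (Fin N),
        if A.card = r then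
          (if ∀ l, l ∉ A → b l = b' l
            then (γ A : ℂ) * ∏ i ∈ A, xe (b i) (b' i) else 0)
        else 0

/-- A Pauli string on `N` registers of `m` qubits each. -/
noncomputable def pauliStringN {N m : ℕ} (s : Fin N → Fin m → Fin 4) :
    Matrix (Fin N → Fin m → Fin 2) (Fin N → Fin m → Fin 2) ℂ :=
  Matrix.of fun b b' => ∏ i : Fin N, ∏ k : Fin m, pauli (s i k) (b i k) (b' i k)

/-!
Expanding `tr (P_s H)` term by term, a Pauli string `s` that occurs in `H` is either diagonal
(`I`/`Z` on every qubit, measured by the all-`Z` circuit) or supported on an `r`-set `A` with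
`tr (P_{s_l} x) ≠ 0` for every `l ∈ A`. On such a register `x` only connects `n` to `n + 1`, which
flips the trailing bits `0, …, j`, so `s_l` is `X`/`Y` on qubits `≤ j` and `I`/`Z` above; as `x`
is real symmetric, `s_l` also has an even number of `Y`s. Hence `s_l` is measured by a full-weight
string `(X|Y)^{j+1} Z^{m-j-1}` with an even number of `Y`s, and there are `2^m - 1` of these.

In place of Baranyai's theorem, colour the registers by their rank in an `(r-1)`-subset `S` of
`{1, …, N-1}`: every `r`-set `A` is rainbow for `S = A \ {min A}`. Giving each colour class one of
the register bases yields `(d-1)^r · C(N-1, r-1)` circuits that cover all interaction terms.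
-/

section TensorMatrix

variable {ι κ R : Type*} [Fintype ι] [CommSemiring R]

def tensorMatrix (P : ι → Matrix κ κ R) : Matrix (ι → κ) (ι → κ) R :=
  of fun b b' => ∏ i, P i (b i) (b' i)

variable [DecidableEq ι]

theorem tensorMatrix_ite_one_apply [DecidableEq κ] (A : Finset ι) (M : ι → Matrix κ κ R)
    (b b' : ι → κ) :
    tensorMatrix (fun i => if i ∈ A then M i else 1) b b' =
      if ∀ l ∉ A, b l = b' l then ∏ i ∈ A, M i (b i) (b' i) else 0 := by
  simp only [tensorMatrix, of_apply]
  split_ifs with h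
  · rw [← Fintype.prod_ite_mem A fun i => M i (b i) (b' i)]
    refine Fintype.prod_congr _ _ fun i => ?_
    split_ifs with hi
    · rfl
    · rw [h i hi, one_apply_eq]
  · push Not at h
    obtain ⟨l, hl, hne⟩ := h
    exact prod_eq_zero (mem_univ l) (by rw [if_neg hl, one_apply_ne hne])

variable [Fintype κ]

theorem tensorMatrix_mul (P Q : ι → Matrix κ κ R) :
    tensorMatrix P * tensorMatrix Q = tensorMatrix fun i => P i * Q i := by
  ext b b'
  simp only [tensorMatrix, mul_apply, of_apply, ← prod_mul_distrib]
  exact (Fintype.prod_sum fun i c => P i (b i) c * Q i c (b' i)).symm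

theorem trace_tensorMatrix (P : ι → Matrix κ κ R) :
    trace (tensorMatrix P) = ∏ i, trace (P i) := by
  simp only [trace, Matrix.diag, tensorMatrix, of_apply]
  exact (Fintype.prod_sum fun i c => P i c c).symm

end TensorMatrix

theorem trace_mul_eq_zero_of_transpose_eq_neg {n K : Type*} [Fintype n] [Field K] [CharZero K]
    {A B : Matrix n n K} (hA : Aᵀ = -A) (hB : Bᵀ = B) : trace (A * B) = 0 := by
  have h : trace (A * B) = -trace (A * B) := by
    conv_lhs => rw [← trace_transpose, transpose_mul, hA, hB, trace_mul_comm, Matrix.neg_mul,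
      trace_neg]
  linear_combination h / 2

theorem card_filter_le_lt_of_lt_of_mem {α : Type*} [LinearOrder α] {S : Finset α} {i i' : α}
    (hii' : i < i') (hi' : i' ∈ S) : #{x ∈ S | x ≤ i} < #{x ∈ S | x ≤ i'} := by
  refine card_lt_card ((ssubset_iff_of_subset ?_).mpr ⟨i', ?_, ?_⟩)
  · intro x hx
    simp only [mem_filter] at hx ⊢
    exact ⟨hx.1, hx.2.trans hii'.le⟩
  · exact mem_filter.mpr ⟨hi', le_rfl⟩
  · simp [hii']

theorem apply_eq_iff_of_forall_ne_of_even_card {ι α : Type*} [Fintype ι] [DecidableEq ι]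
    [DecidableEq α] {c c' : ι → α} {a : α} {j : ι} (hoff : ∀ k ≠ j, c k = c' k)
    (hc : Even #{k | c k = a}) (hc' : Even #{k | c' k = a}) : c j = a ↔ c' j = a := by
  have hsplit : ∀ d : ι → α, #{k | d k = a} =
      (if d j = a then 1 else 0) + ∑ k ∈ univ.erase j, if d k = a then 1 else 0 := fun d => by
    rw [card_filter, ← add_sum_erase _ _ (mem_univ j)]
  have hrest : ∑ k ∈ univ.erase j, (if c k = a then 1 else 0) =
      ∑ k ∈ univ.erase j, if c' k = a then 1 else 0 :=
    sum_congr rfl fun k hk => by rw [hoff k (ne_of_mem_erase hk)]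
  rw [hsplit, hrest, Nat.even_iff] at hc
  rw [hsplit, Nat.even_iff] at hc'
  split_ifs at hc hc' <;> simp_all <;> omega

theorem ne_zero_or_ne_zero_of_add_ne_zero {M : Type*} [AddZeroClass M] {a b : M}
    (h : a + b ≠ 0) : a ≠ 0 ∨ b ≠ 0 :=
  not_and_or.mp fun hab => h (by rw [hab.1, hab.2, add_zero])

theorem pauli_transpose (σ : Fin 4) : (pauli σ)ᵀ = (if σ = 2 then -1 else 1) • pauli σ := by
  ext c c'
  fin_cases σ <;> fin_cases c <;> fin_cases c' <;> simp [pauli]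

theorem eq_zero_of_trace_pauli_ne_zero {σ : Fin 4} (h : trace (pauli σ) ≠ 0) : σ = 0 := by
  fin_cases σ <;> simp_all [pauli, trace_fin_two]

theorem eq_zero_or_eq_three_of_pauli_apply_self_ne_zero {σ : Fin 4} {c : Fin 2}
    (h : pauli σ c c ≠ 0) : σ = 0 ∨ σ = 3 := by
  fin_cases σ <;> fin_cases c <;> simp_all [pauli]

theorem eq_one_or_eq_two_of_pauli_apply_ne_zero {σ : Fin 4} {c c' : Fin 2} (hc : c ≠ c')
    (h : pauli σ c c' ≠ 0) : σ = 1 ∨ σ = 2 := by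
  fin_cases σ <;> fin_cases c <;> fin_cases c' <;> simp_all [pauli]

noncomputable def pauliString {m : ℕ} (t : Fin m → Fin 4) :
    Matrix (Fin m → Fin 2) (Fin m → Fin 2) ℂ :=
  tensorMatrix fun k => pauli (t k)

theorem pauliStringN_eq {N m : ℕ} (s : Fin N → Fin m → Fin 4) :
    pauliStringN s = tensorMatrix fun i => pauliString (s i) :=
  rfl

section Register

variable {m : ℕ}

theorem pauliString_transpose (t : Fin m → Fin 4) :
    (pauliString t)ᵀ = (-1 : ℂ) ^ #{k | t k = 2} • pauliString t := by
  ext x y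
  have hsign : ∏ k, (if t k = 2 then (-1 : ℂ) else 1) = (-1) ^ #{k | t k = 2} := by
    rw [← prod_filter, prod_const]
  simp only [transpose_apply, pauliString, tensorMatrix, of_apply, Matrix.smul_apply, smul_eq_mul,
    ← hsign, ← prod_mul_distrib]
  refine Fintype.prod_congr _ _ fun k => ?_
  simpa using congrFun (congrFun (pauli_transpose (t k)) (x k)) (y k)

theorem eq_zero_of_trace_pauliString_ne_zero {t : Fin m → Fin 4}
    (h : trace (pauliString t) ≠ 0) : t = 0 := by
  rw [pauliString, trace_tensorMatrix] at h
  exact funext fun k => eq_zero_of_trace_pauli_ne_zero (prod_ne_zero_iff.mp h k (mem_univ k))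

theorem diagonal_of_trace_pauliString_mul_ne_zero {t : Fin m → Fin 4}
    {M : Matrix (Fin m → Fin 2) (Fin m → Fin 2) ℂ} (hM : ∀ x y, M x y ≠ 0 → x = y)
    (h : trace (pauliString t * M) ≠ 0) : ∀ k, t k = 0 ∨ t k = 3 := by
  obtain ⟨x, -, hx⟩ := exists_ne_zero_of_sum_ne_zero h
  obtain ⟨y, -, hxy⟩ := exists_ne_zero_of_sum_ne_zero hx
  obtain rfl := hM y x (right_ne_zero_of_mul hxy)
  intro k
  exact eq_zero_or_eq_three_of_pauli_apply_self_ne_zero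
    (prod_ne_zero_iff.mp (left_ne_zero_of_mul hxy) k (mem_univ k))

theorem bval_injective : Function.Injective (bval : (Fin m → Fin 2) → ℕ) := by
  intro x y h
  apply finFunctionFinEquiv.injective
  ext
  simp only [finFunctionFinEquiv_apply]
  simpa only [bval, mul_comm] using h

theorem bval_cons (a : Fin 2) (x : Fin m → Fin 2) :
    bval (Fin.cons a x : Fin (m + 1) → Fin 2) = a + 2 * bval x := by
  simp [bval, Fin.sum_univ_succ, mul_sum, pow_succ, mul_comm, mul_left_comm]

theorem exists_flip_of_bval_eq_succ :
    ∀ {m : ℕ} {x y : Fin m → Fin 2}, bval y = bval x + 1 → ∃ j : Fin m, ∀ k, x k ≠ y k ↔ k ≤ j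
  | 0, _, _, h => by simp [bval] at h
  | m + 1, x, y, h => by
    induction x using Fin.consCases with | cons a x => ?_
    induction y using Fin.consCases with | cons b y => ?_
    rw [bval_cons, bval_cons] at h
    fin_cases a <;> fin_cases b <;> simp only at h
    · omega
    · obtain rfl : x = y := bval_injective (by omega)
      refine ⟨0, fun k => ?_⟩
      induction k using Fin.cases <;> simp
    · obtain ⟨j, hj⟩ := exists_flip_of_bval_eq_succ (x := x) (y := y) (by omega)
      refine ⟨j.succ, fun k => ?_⟩
      induction k using Fin.cases <;> simp [hj]
    · omega

theorem xc_comm (a b : ℕ) : xc a b = xc b a := by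
  unfold xc
  split_ifs <;> first | rfl | omega

theorem eq_succ_or_succ_eq_of_xc_ne_zero {a b : ℕ} (h : xc a b ≠ 0) : a = b + 1 ∨ b = a + 1 := by
  unfold xc at h
  split_ifs at h <;> tauto

theorem exists_flip_of_xe_ne_zero {x y : Fin m → Fin 2} (h : xe x y ≠ 0) :
    ∃ j : Fin m, ∀ k, x k ≠ y k ↔ k ≤ j := by
  rcases eq_succ_or_succ_eq_of_xc_ne_zero h with hxy | hyx
  · simpa only [ne_comm] using exists_flip_of_bval_eq_succ hxy
  · exact exists_flip_of_bval_eq_succ hyx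

theorem exists_flip_pattern_of_trace_pauliString_mul_ne_zero {t : Fin m → Fin 4}
    (h : trace (pauliString t * of xe) ≠ 0) :
    ∃ j : Fin m, (∀ k ≤ j, t k = 1 ∨ t k = 2) ∧ ∀ k, j < k → t k = 0 ∨ t k = 3 := by
  obtain ⟨x, -, hx⟩ := exists_ne_zero_of_sum_ne_zero h
  obtain ⟨y, -, hxy⟩ := exists_ne_zero_of_sum_ne_zero hx
  have hpauli : ∀ k, pauli (t k) (x k) (y k) ≠ 0 := fun k =>
    prod_ne_zero_iff.mp (left_ne_zero_of_mul hxy) k (mem_univ k)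
  obtain ⟨j, hj⟩ := exists_flip_of_xe_ne_zero (right_ne_zero_of_mul hxy)
  refine ⟨j, fun k hk => eq_one_or_eq_two_of_pauli_apply_ne_zero ?_ (hpauli k), fun k hk => ?_⟩
  · exact (ne_comm.trans (hj k)).mpr hk
  · have hyx : y k = x k := not_not.mp fun hne => not_le.mpr hk ((hj k).mp hne)
    exact eq_zero_or_eq_three_of_pauli_apply_self_ne_zero (hyx ▸ hpauli k)

theorem even_card_Y_of_trace_pauliString_mul_ne_zero {t : Fin m → Fin 4}
    (h : trace (pauliString t * of xe) ≠ 0) : Even #{k | t k = 2} := by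
  by_contra hodd
  refine h (trace_mul_eq_zero_of_transpose_eq_neg ?_ ?_)
  · rw [pauliString_transpose, (Nat.not_even_iff_odd.mp hodd).neg_one_pow, neg_one_smul]
  · ext x y
    exact xc_comm _ _

def xBases (m : ℕ) : Finset (Fin m → Fin 4) :=
  {c | (∃ j, (∀ k ≤ j, c k = 1 ∨ c k = 2) ∧ ∀ k, j < k → c k = 3) ∧ Even #{k | c k = 2}}

theorem mem_xBases {c : Fin m → Fin 4} :
    c ∈ xBases m ↔
      (∃ j, (∀ k ≤ j, c k = 1 ∨ c k = 2) ∧ ∀ k, j < k → c k = 3) ∧ Even #{k | c k = 2} := by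
  simp [xBases]

theorem ne_zero_of_mem_xBases {c : Fin m → Fin 4} (hc : c ∈ xBases m) (k : Fin m) : c k ≠ 0 := by
  obtain ⟨⟨j, hle, hgt⟩, -⟩ := mem_xBases.mp hc
  rcases le_or_gt k j with hk | hk
  · rcases hle k hk with h | h <;> simp [h]
  · simp [hgt k hk]

theorem exists_mem_xBases_of_trace_pauliString_mul_ne_zero {t : Fin m → Fin 4}
    (h : trace (pauliString t * of xe) ≠ 0) : ∃ c ∈ xBases m, ∀ k, t k ≠ 0 → c k = t k := by
  obtain ⟨j, hle, hgt⟩ := exists_flip_pattern_of_trace_pauliString_mul_ne_zero h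
  refine ⟨fun k => if k ≤ j then t k else 3, mem_xBases.mpr ⟨⟨j, ?_, ?_⟩, ?_⟩, fun k hk => ?_⟩
  · intro k hk
    simpa [hk] using hle k hk
  · intro k hk
    simp [not_le.mpr hk]
  · convert even_card_Y_of_trace_pauliString_mul_ne_zero h using 2
    refine filter_congr fun k _ => ?_
    split_ifs with hk
    · rfl
    · rcases hgt k (not_le.mp hk) with h | h <;> simp [h]
  · dsimp only
    split_ifs with hkj
    · rfl
    · exact ((hgt k (not_le.mp hkj)).resolve_left hk).symm

/-- On `xBases`, `flipCode c` marks the last `X`/`Y` position `j` of `c` and the `Y`s below it;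
the letter at `j` is then fixed by the parity of the `Y`s, so `flipCode` is injective there. -/
def flipCode (c : Fin m → Fin 4) : Fin m → Fin 2 :=
  fun k => if c k = 2 ∨ (c k = 1 ∧ ∀ k', k < k' → c k' = 3) then 1 else 0

theorem flipCode_eq_one_iff {c : Fin m → Fin 4} {j : Fin m} (hle : ∀ k ≤ j, c k = 1 ∨ c k = 2)
    (hgt : ∀ k, j < k → c k = 3) (k : Fin m) : flipCode c k = 1 ↔ k = j ∨ k < j ∧ c k = 2 := by
  rcases lt_trichotomy k j with hk | rfl | hk
  · have hj : c j ≠ 3 := by rcases hle j le_rfl with h | h <;> simp [h]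
    have : ¬ ∀ k', k < k' → c k' = 3 := fun h => hj (h j hk)
    simp [flipCode, this, hk, hk.ne]
  · rcases hle k le_rfl with h | h
    · simpa [flipCode, h] using hgt
    · simp [flipCode, h]
  · simp [flipCode, hgt k hk, hk.ne', hk.not_gt]

theorem flipCode_injOn : Set.InjOn flipCode (xBases m : Set (Fin m → Fin 4)) := by
  intro c hc c' hc' hcode
  obtain ⟨⟨j, hle, hgt⟩, hev⟩ := mem_xBases.mp hc
  obtain ⟨⟨j', hle', hgt'⟩, hev'⟩ := mem_xBases.mp hc'
  have hiff : ∀ k, k = j ∨ k < j ∧ c k = 2 ↔ k = j' ∨ k < j' ∧ c' k = 2 := fun k => by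
    rw [← flipCode_eq_one_iff hle hgt, ← flipCode_eq_one_iff hle' hgt', hcode]
  obtain rfl : j = j' := by
    rcases (hiff j).mp (Or.inl rfl) with h | h
    · exact h
    rcases (hiff j').mpr (Or.inl rfl) with h' | h'
    · exact h'.symm
    · exact absurd (h.1.trans h'.1) (lt_irrefl j)
  have hoff : ∀ k ≠ j, c k = c' k := by
    intro k hk
    rcases lt_or_gt_of_ne hk with hlt | hgt_k
    · have h2 : c k = 2 ↔ c' k = 2 := by simpa [hk, hlt] using hiff k
      rcases hle k hlt.le with h | h <;> rcases hle' k hlt.le with h' | h' <;> simp_all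
    · rw [hgt k hgt_k, hgt' k hgt_k]
  funext k
  by_cases hk : k = j
  · subst hk
    have h2 := apply_eq_iff_of_forall_ne_of_even_card hoff hev hev'
    rcases hle k le_rfl with h | h <;> rcases hle' k le_rfl with h' | h' <;> simp_all
  · exact hoff k hk

theorem card_xBases_le : #(xBases m) ≤ 2 ^ m - 1 := by
  have hmaps : Set.MapsTo flipCode (xBases m : Set (Fin m → Fin 4))
      (univ.erase 0 : Finset (Fin m → Fin 2)) := by
    intro c hc
    obtain ⟨⟨j, hle, hgt⟩, -⟩ := mem_xBases.mp hc
    refine mem_erase.mpr ⟨fun h0 => ?_, mem_univ _⟩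
    have := (flipCode_eq_one_iff hle hgt j).mpr (Or.inl rfl)
    simp [h0] at this
  calc #(xBases m) ≤ #(univ.erase (0 : Fin m → Fin 2)) :=
        card_le_card_of_injOn flipCode hmaps flipCode_injOn
    _ = 2 ^ m - 1 := by simp [card_erase_of_mem]

end Register

section RainbowCircuits

def rankColouring {N : ℕ} (r : ℕ) [NeZero r] (S : Finset (Fin N)) (i : Fin N) : Fin r :=
  Fin.ofNat r #{x ∈ S | x ≤ i}

def rankSets (N r : ℕ) : Finset (Finset (Fin N)) :=
  ({i | (i : ℕ) ≠ 0} : Finset (Fin N)).powersetCard (r - 1)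

theorem card_rankSets {N r : ℕ} : #(rankSets N r) = (N - 1).choose (r - 1) := by
  rw [rankSets, card_powersetCard]
  congr
  rcases N with _ | n
  · simp
  · simp [Fin.card_filter_univ_succ]

variable {N r : ℕ} [NeZero r]

theorem exists_mem_rankSets_injOn_rankColouring {A : Finset (Fin N)} (hA : #A = r) :
    ∃ S ∈ rankSets N r, Set.InjOn (rankColouring r S) A := by
  have hne : A.Nonempty := card_pos.mp (hA ▸ Nat.pos_of_neZero r)
  set i₀ := A.min' hne
  have hcard : #(A.erase i₀) = r - 1 := by rw [card_erase_of_mem (A.min'_mem hne), hA]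
  have hgt : ∀ x ∈ A.erase i₀, i₀ < x := fun x hx =>
    lt_of_le_of_ne (A.min'_le x (mem_of_mem_erase hx)) (ne_of_mem_erase hx).symm
  have hlt : ∀ i ∈ A, ∀ i' ∈ A, i < i' →
      rankColouring r (A.erase i₀) i ≠ rankColouring r (A.erase i₀) i' := by
    intro i hi i' hi' hii' heq
    have hρ := card_filter_le_lt_of_lt_of_mem hii'
      (mem_erase.mpr ⟨(lt_of_le_of_lt (A.min'_le i hi) hii').ne', hi'⟩)
    have hρ' : #{x ∈ A.erase i₀ | x ≤ i'} < r :=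
      (card_filter_le _ _).trans_lt (hcard ▸ Nat.sub_lt (Nat.pos_of_neZero r) one_pos)
    have := congrArg Fin.val heq
    simp only [rankColouring, Fin.val_ofNat] at this
    rw [Nat.mod_eq_of_lt (hρ.trans hρ'), Nat.mod_eq_of_lt hρ'] at this
    exact hρ.ne this
  refine ⟨A.erase i₀, mem_powersetCard.mpr ⟨fun x hx => ?_, hcard⟩, fun i hi i' hi' heq => ?_⟩
  · exact mem_filter.mpr ⟨mem_univ x, Nat.ne_zero_of_lt (hgt x hx)⟩
  · by_contra hne
    rcases lt_or_gt_of_ne hne with h | h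
    exacts [hlt i hi i' hi' h heq, hlt i' hi' i hi h heq.symm]

variable {β : Type*} [DecidableEq β]

def rainbowCircuits (N r : ℕ) [NeZero r] (B : Finset β) : Finset (Fin N → β) :=
  (rankSets N r ×ˢ (univ : Finset (Fin r → B))).image fun Sv i => Sv.2 (rankColouring r Sv.1 i)

theorem card_rainbowCircuits_le (B : Finset β) :
    #(rainbowCircuits N r B) ≤ (N - 1).choose (r - 1) * #B ^ r := by
  refine card_image_le.trans_eq ?_
  simp [card_rankSets]

theorem mem_of_mem_rainbowCircuits {B : Finset β} {b : Fin N → β}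
    (hb : b ∈ rainbowCircuits N r B) (i : Fin N) : b i ∈ B := by
  obtain ⟨Sv, -, rfl⟩ := mem_image.mp hb
  exact (Sv.2 _).2

theorem exists_mem_rainbowCircuits_eqOn {B : Finset β} {A : Finset (Fin N)} (hA : #A = r)
    {c : Fin N → β} (hc : ∀ l ∈ A, c l ∈ B) :
    ∃ b ∈ rainbowCircuits N r B, ∀ l ∈ A, b l = c l := by
  obtain ⟨S, hS, hinj⟩ := exists_mem_rankSets_injOn_rankColouring hA
  obtain ⟨l₀, hl₀⟩ : A.Nonempty := card_pos.mp (hA ▸ Nat.pos_of_neZero r)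
  let f : A → Fin r := fun l => rankColouring r S l
  have hf : Function.Injective f := fun l l' h => Subtype.ext (hinj l.2 l'.2 h)
  let g : A → B := fun l => ⟨c l, hc l l.2⟩
  let v : Fin r → B := Function.extend f g fun _ => g ⟨l₀, hl₀⟩
  refine ⟨fun i => v (rankColouring r S i), mem_image.mpr ⟨(S, v), by simp [hS], rfl⟩,
    fun l hl => ?_⟩
  exact congrArg Subtype.val (hf.extend_apply g _ ⟨l, hl⟩)

end RainbowCircuits

theorem HamR_eq_sum_tensorMatrix (N m r : ℕ) (γ : Finset (Fin N) → ℝ) :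
    HamR N m r γ =
      ∑ i, tensorMatrix (fun l => if l ∈ ({i} : Finset (Fin N)) then of numE else 1) +
        ∑ A with #A = r, (γ A : ℂ) • tensorMatrix fun l => if l ∈ A then of xe else 1 := by
  ext b b'
  simp only [Matrix.add_apply, Matrix.sum_apply, Matrix.smul_apply, tensorMatrix_ite_one_apply]
  simp only [HamR, of_apply, sum_filter, mem_singleton, prod_singleton, smul_eq_mul, mul_ite,
    mul_zero]

theorem support_of_trace_pauliStringN_mul_ne_zero {N m : ℕ} {s : Fin N → Fin m → Fin 4}
    {A : Finset (Fin N)} {M : Matrix (Fin m → Fin 2) (Fin m → Fin 2) ℂ}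
    (h : trace (pauliStringN s * tensorMatrix fun l => if l ∈ A then M else 1) ≠ 0) :
    (∀ l ∉ A, s l = 0) ∧ ∀ l ∈ A, trace (pauliString (s l) * M) ≠ 0 := by
  rw [pauliStringN_eq, tensorMatrix_mul, trace_tensorMatrix] at h
  have hfactor := fun l => prod_ne_zero_iff.mp h l (mem_univ l)
  refine ⟨fun l hl => eq_zero_of_trace_pauliString_ne_zero ?_, fun l hl => ?_⟩
  · simpa [hl] using hfactor l
  · simpa [hl] using hfactor l

theorem pauli_terms_of_trace_pauliStringN_mul_HamR_ne_zero {N m r : ℕ} {γ : Finset (Fin N) → ℝ}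
    {s : Fin N → Fin m → Fin 4} (h : trace (pauliStringN s * HamR N m r γ) ≠ 0) :
    (∀ i k, s i k = 0 ∨ s i k = 3) ∨
      ∃ A : Finset (Fin N), #A = r ∧ (∀ l ∉ A, s l = 0) ∧
        ∀ l ∈ A, trace (pauliString (s l) * of xe) ≠ 0 := by
  rw [HamR_eq_sum_tensorMatrix, Matrix.mul_add, trace_add, mul_sum, mul_sum, trace_sum,
    trace_sum] at h
  obtain hnum | hint := ne_zero_or_ne_zero_of_add_ne_zero h
  · obtain ⟨i, -, hi⟩ := exists_ne_zero_of_sum_ne_zero hnum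
    obtain ⟨hout, hin⟩ := support_of_trace_pauliStringN_mul_ne_zero hi
    have hnumE : ∀ x y : Fin m → Fin 2, of numE x y ≠ 0 → x = y := fun x y hxy => by
      by_contra hne
      simp [numE, hne] at hxy
    left
    intro l k
    by_cases hl : l = i
    · subst hl
      exact diagonal_of_trace_pauliString_mul_ne_zero hnumE (hin l (mem_singleton_self l)) k
    · simp [hout l (by simpa using hl)]
  · obtain ⟨A, hA, hAne⟩ := exists_ne_zero_of_sum_ne_zero hint
    rw [Matrix.mul_smul, trace_smul, smul_eq_mul] at hAne
    exact Or.inr ⟨A, (mem_filter.mp hA).2,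
      support_of_trace_pauliStringN_mul_ne_zero (right_ne_zero_of_mul hAne)⟩

theorem r_body_circuit_count_general (N m r : ℕ) (hr : 2 ≤ r)
    (γ : Finset (Fin N) → ℝ) :
    ∃ T : Finset (Fin N → Fin m → Fin 4),
      (∀ b ∈ T, ∀ i k, b i k ≠ 0) ∧
      (∀ s : Fin N → Fin m → Fin 4,
        Matrix.trace (pauliStringN s * HamR N m r γ) ≠ 0 →
          ∃ b ∈ T, ∀ i k, s i k ≠ 0 → b i k = s i k) ∧
      T.card ≤ (2 ^ m - 1) ^ r * Nat.choose (N - 1) (r - 1) + 1 := by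
  have : NeZero r := ⟨by omega⟩
  refine ⟨insert (fun _ _ => 3) (rainbowCircuits N r (xBases m)), ?_, fun s hs => ?_, ?_⟩
  · intro b hb i k
    rcases mem_insert.mp hb with rfl | hb
    · simp
    · exact ne_zero_of_mem_xBases (mem_of_mem_rainbowCircuits hb i) k
  · rcases pauli_terms_of_trace_pauliStringN_mul_HamR_ne_zero hs with hdiag | ⟨A, hA, hout, hin⟩
    · exact ⟨_, mem_insert_self _ _, fun i k hik => ((hdiag i k).resolve_left hik).symm⟩
    choose! c hcB hcov using fun l hl =>
      exists_mem_xBases_of_trace_pauliString_mul_ne_zero (hin l hl)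
    obtain ⟨b, hb, hbc⟩ := exists_mem_rainbowCircuits_eqOn hA hcB
    refine ⟨b, mem_insert_of_mem hb, fun i k hik => ?_⟩
    by_cases hi : i ∈ A
    · rw [hbc i hi, hcov i hi k hik]
    · simp [hout i hi] at hik
  · calc _ ≤ #(rainbowCircuits N r (xBases m)) + 1 := card_insert_le _ _
      _ ≤ (N - 1).choose (r - 1) * #(xBases m) ^ r + 1 := by
        gcongr
        exact card_rainbowCircuits_le _
      _ ≤ (2 ^ m - 1) ^ r * (N - 1).choose (r - 1) + 1 := by
        rw [mul_comm]
        gcongr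
        exact card_xBases_le

/-- for `N` oscillators with all-to-all `r`-body couplings `x^{⊗r}`
(`r ≥ 2`, `r ∣ N`), the Pauli terms of the Hamiltonian can be measured using at most
`(d−1)^r · C(N−1, r−1) + 1` circuits, where `d = 2^m`. -/
theorem r_body_circuit_count (N m r : ℕ) (hr : 2 ≤ r) (hrN : r ∣ N) (hm : 1 ≤ m)
    (γ : Finset (Fin N) → ℝ) :
    ∃ T : Finset (Fin N → Fin m → Fin 4),
      (∀ b ∈ T, ∀ i k, b i k ≠ 0) ∧
      (∀ s : Fin N → Fin m → Fin 4,
        Matrix.trace (pauliStringN s * HamR N m r γ) ≠ 0 →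
          ∃ b ∈ T, ∀ i k, s i k ≠ 0 → b i k = s i k) ∧
      T.card ≤ (2 ^ m - 1) ^ r * Nat.choose (N - 1) (r - 1) + 1 :=
  r_body_circuit_count_general N m r hr γ
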